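/- Let σ = 2d − 1 ≥ 7 be an odd integer and let T = Cat(d, d, …, d) be the caterpillar tree of length ℓ = σ − 1 in which every spine degree equals d. Then there is no edge-coloring φ of T using colors from {1, …, σ}, in which every two distinct edges at distance at most two receive different colors, such that φ(E₁) = {1, …, d}, φ(E_ℓ) = {1, …, d}, φ(x₀x₁) = 1 and φ(x_ℓ x_{ℓ+1}) = 1. In particular T is not σ-two-sided strong edge-pre-colorable, although σ(T) = σ. -/
import Mathlib


open SimpleGraph

/-- The degree of a vertex (cardinality of its neighbor set). -/
noncomputable def ndeg {V : Type*} (G : SimpleGraph V) (v : V) : ℕ :=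
  (G.neighborSet v).ncard

/-- `σ(G)`: the maximum of `deg x + deg y - 1` over all edges `xy` of `G`. -/
noncomputable def sigmaG {V : Type*} (G : SimpleGraph V) : ℕ :=
  sSup {m | ∃ x y, G.Adj x y ∧ m = ndeg G x + ndeg G y - 1}

/-- The maximum degree `Δ(G)`. -/
noncomputable def maxDeg {V : Type*} (G : SimpleGraph V) : ℕ :=
  sSup (Set.range (ndeg G))

/-- Two edges are at distance at most two: they share an endpoint, or an endpoint of
one is adjacent to an endpoint of the other. -/
def EdgesNear {V : Type*} (G : SimpleGraph V) (e f : Sym2 V) : Prop :=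
  ∃ u v, u ∈ e ∧ v ∈ f ∧ (u = v ∨ G.Adj u v)

/-- A strong edge-coloring: every two distinct edges at distance at most two
receive different colors. -/
def IsStrongEdgeColoring {V α : Type*} (G : SimpleGraph V) (φ : Sym2 V → α) : Prop :=
  ∀ e ∈ G.edgeSet, ∀ f ∈ G.edgeSet, e ≠ f → EdgesNear G e f → φ e ≠ φ f

/-- The strong chromatic index `χ'ₛ(G)`: the least `k` such that `G` has a strong
edge-coloring with colors `0, …, k-1`. -/
noncomputable def strongChromaticIndex {V : Type*} (G : SimpleGraph V) : ℕ :=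
  sInf {k | ∃ φ : Sym2 V → ℕ, (∀ e ∈ G.edgeSet, φ e < k) ∧ IsStrongEdgeColoring G φ}

/-- The set of edges incident with a vertex `v`. -/
def Einc {V : Type*} (G : SimpleGraph V) (v : V) : Set (Sym2 V) :=
  {e ∈ G.edgeSet | v ∈ e}
/-- The vertex type of the caterpillar tree `Cat(d 1, …, d ℓ)`: the spine
`x_0, x_1, …, x_{ℓ+1}` (as `Fin (ℓ+2)`) together with `d (i+1) - 2` pendant leaves
attached to the spine vertex `x_{i+1}` for each `i : Fin ℓ`. -/
abbrev CatV (ℓ : ℕ) (d : ℕ → ℕ) : Type :=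
  Fin (ℓ + 2) ⊕ (Σ i : Fin ℓ, Fin (d (i.val + 1) - 2))

/-- Generating relation for the caterpillar: consecutive spine vertices are adjacent,
and each leaf in the `i`-th leaf group is adjacent to the spine vertex `x_{i+1}`. -/
def CatRel (ℓ : ℕ) (d : ℕ → ℕ) : CatV ℓ d → CatV ℓ d → Prop
  | Sum.inl i, Sum.inl j => (j : ℕ) = (i : ℕ) + 1
  | Sum.inr p, Sum.inl k => (k : ℕ) = (p.1 : ℕ) + 1
  | _, _ => False

/-- The caterpillar tree `Cat(d 1, …, d ℓ)` with spine `x_0, …, x_{ℓ+1}`, in which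
the spine vertex `x_i` has degree `d i` for `1 ≤ i ≤ ℓ` (provided `d i ≥ 2`). -/
def Cat (ℓ : ℕ) (d : ℕ → ℕ) : SimpleGraph (CatV ℓ d) :=
  SimpleGraph.fromRel (CatRel ℓ d)

/-- There exists a strong edge-coloring `φ` of `Cat ℓ d` using colors from `C` with
`φ(E 1) = C₁`, `φ(E ℓ) = Cl`, `φ(x₀x₁) = α₀` and `φ(x_ℓ x_{ℓ+1}) = αl`. -/
def CatPrecolorExists (ℓ : ℕ) (d : ℕ → ℕ) (C C₁ Cl : Finset ℕ) (α₀ αl : ℕ) : Prop :=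
  ∃ φ : Sym2 (CatV ℓ d) → ℕ,
    (∀ e ∈ (Cat ℓ d).edgeSet, φ e ∈ C) ∧
    IsStrongEdgeColoring (Cat ℓ d) φ ∧
    φ '' Einc (Cat ℓ d) (Sum.inl ⟨1, by omega⟩) = ↑C₁ ∧
    φ '' Einc (Cat ℓ d) (Sum.inl ⟨ℓ, by omega⟩) = ↑Cl ∧
    φ s(Sum.inl ⟨0, by omega⟩, Sum.inl ⟨1, by omega⟩) = α₀ ∧
    φ s(Sum.inl ⟨ℓ, by omega⟩, Sum.inl ⟨ℓ + 1, by omega⟩) = αl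

/-- `Cat ℓ d` is `κ`-two-sided strong edge-pre-colorable: for every `κ`-set `C` of colors,
all `C₁, Cl ⊆ C` with `|C₁| = d 1`, `|Cl| = d ℓ`, and all `α₀ ∈ C₁`, `αl ∈ Cl`, there is
a strong edge-coloring `φ` of `Cat ℓ d` with colors from `C` such that `φ(E 1) = C₁`,
`φ(E ℓ) = Cl`, `φ(x₀x₁) = α₀` and `φ(x_ℓ x_{ℓ+1}) = αl`. -/
def TwoSidedPrecolorable (ℓ : ℕ) (d : ℕ → ℕ) (κ : ℕ) : Prop :=
  ∀ C C₁ Cl : Finset ℕ, C.card = κ → C₁ ⊆ C → Cl ⊆ C →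
    C₁.card = d 1 → Cl.card = d ℓ →
    ∀ α₀ ∈ C₁, ∀ αl ∈ Cl, CatPrecolorExists ℓ d C C₁ Cl α₀ αl

/-- `ℓ_σ` from the refined key lemma: `ℓ_5 = 8`, `ℓ_6 = ℓ_7 = 7`, `ℓ_σ = σ` for `σ ≥ 8`. -/
def ellSigma (s : ℕ) : ℕ :=
  if s = 5 then 8 else if s ≤ 7 then 7 else s


section Helpers

lemma Einc_eq {V : Type*} (G : SimpleGraph V) (v : V) :
    Einc G v = (fun w => s(v, w)) '' G.neighborSet v := by
  ext e
  simp only [Einc, Set.mem_setOf_eq, Set.mem_image, mem_neighborSet]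
  constructor
  · rintro ⟨he, hv⟩
    obtain ⟨w, rfl⟩ := Sym2.mem_iff_exists.mp hv
    exact ⟨w, G.mem_edgeSet.mp he, rfl⟩
  · rintro ⟨w, hw, rfl⟩
    exact ⟨G.mem_edgeSet.mpr hw, Sym2.mem_mk_left v w⟩

lemma ncard_Einc {V : Type*} (G : SimpleGraph V) (v : V) :
    (Einc G v).ncard = (G.neighborSet v).ncard := by
  rw [Einc_eq, Set.ncard_image_of_injective _ (fun a b h => Sym2.congr_right.mp h)]

variable {ℓ d : ℕ}

lemma adj_spine (k : ℕ) (hk : k + 1 < ℓ + 2) :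
    (Cat ℓ (fun _ => d)).Adj (Sum.inl ⟨k, by omega⟩) (Sum.inl ⟨k+1, hk⟩) := by
  rw [Cat, fromRel_adj]
  exact ⟨by simp [Fin.ext_iff], Or.inl rfl⟩

lemma neighborSet_spine (k : ℕ) (h1 : 1 ≤ k) (h2 : k ≤ ℓ) :
    (Cat ℓ (fun _ => d)).neighborSet (Sum.inl ⟨k, by omega⟩) =
      ({Sum.inl ⟨k-1, by omega⟩, Sum.inl ⟨k+1, by omega⟩} : Set (CatV ℓ (fun _ => d))) ∪
      Set.range (fun t : Fin (d-2) =>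
        (Sum.inr ⟨⟨k-1, by omega⟩, t⟩ : CatV ℓ (fun _ => d))) := by
  ext v
  simp only [mem_neighborSet, Cat, fromRel_adj, Set.mem_union, Set.mem_insert_iff,
    Set.mem_singleton_iff, Set.mem_range]
  cases v with
  | inl j =>
    have hj := j.isLt
    simp only [CatRel, Sum.inl.injEq, Fin.ext_iff, ne_eq, reduceCtorEq,
      exists_const, exists_false, or_false]
    constructor
    · rintro ⟨hne, h | h⟩ <;> omega
    · rintro (h | h) <;> exact ⟨by omega, by omega⟩
  | inr p =>
    obtain ⟨i, t'⟩ := p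
    have hi := i.isLt
    constructor
    · rintro ⟨hne, h | h⟩
      · exact absurd h (by simp [CatRel])
      · right
        have hk : (k:ℕ) = i.val + 1 := h
        have hik : (⟨k-1, by omega⟩ : Fin ℓ) = i := Fin.ext (by simp; omega)
        exact ⟨t', by rw [hik]⟩
    · rintro ((h | h) | ⟨t, ht⟩)
      · exact absurd h (by simp)
      · exact absurd h (by simp)
      · injection ht with h2
        have h3 : (⟨k-1, by omega⟩ : Fin ℓ) = i := congrArg Sigma.fst h2
        refine ⟨by simp, Or.inr ?_⟩
        show (k:ℕ) = i.val + 1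
        have : i.val = k - 1 := by rw [← h3]
        omega

lemma neighborSet_zero :
    (Cat ℓ (fun _ => d)).neighborSet (Sum.inl ⟨0, by omega⟩) =
      {(Sum.inl ⟨1, by omega⟩ : CatV ℓ (fun _ => d))} := by
  ext v
  simp only [mem_neighborSet, Cat, fromRel_adj, Set.mem_singleton_iff]
  cases v with
  | inl j =>
    have hj := j.isLt
    simp only [CatRel, Sum.inl.injEq, Fin.ext_iff, ne_eq]
    constructor
    · rintro ⟨hne, h | h⟩ <;> omega
    · intro h; exact ⟨by omega, by omega⟩
  | inr p =>
    obtain ⟨i, t'⟩ := p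
    constructor
    · rintro ⟨hne, h | h⟩
      · exact absurd h (by simp [CatRel])
      · have h' : (0:ℕ) = i.val + 1 := h
        omega
    · intro h; exact absurd h (by simp)

lemma neighborSet_final :
    (Cat ℓ (fun _ => d)).neighborSet (Sum.inl ⟨ℓ+1, by omega⟩) =
      {(Sum.inl ⟨ℓ, by omega⟩ : CatV ℓ (fun _ => d))} := by
  ext v
  simp only [mem_neighborSet, Cat, fromRel_adj, Set.mem_singleton_iff]
  cases v with
  | inl j =>
    have hj := j.isLt
    simp only [CatRel, Sum.inl.injEq, Fin.ext_iff, ne_eq]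
    constructor
    · rintro ⟨hne, h | h⟩ <;> omega
    · intro h; exact ⟨by omega, by omega⟩
  | inr p =>
    obtain ⟨i, t'⟩ := p
    have hi := i.isLt
    constructor
    · rintro ⟨hne, h | h⟩
      · exact absurd h (by simp [CatRel])
      · have h' : (ℓ+1:ℕ) = i.val + 1 := h
        omega
    · intro h; exact absurd h (by simp)

lemma neighborSet_leaf (i : Fin ℓ) (t : Fin (d-2)) :
    (Cat ℓ (fun _ => d)).neighborSet (Sum.inr ⟨i, t⟩) =
      {(Sum.inl ⟨i.val+1, by omega⟩ : CatV ℓ (fun _ => d))} := by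
  ext v
  simp only [mem_neighborSet, Cat, fromRel_adj, Set.mem_singleton_iff]
  cases v with
  | inl j =>
    have hj := j.isLt
    have hi := i.isLt
    constructor
    · rintro ⟨hne, h | h⟩
      · have h' : (j:ℕ) = i.val + 1 := h
        exact congrArg Sum.inl (Fin.ext h')
      · exact absurd h (by simp [CatRel])
    · intro h
      injection h with h'
      refine ⟨by simp, Or.inl ?_⟩
      show (j:ℕ) = i.val + 1
      rw [h']
  | inr p =>
    obtain ⟨i', t'⟩ := p
    constructor
    · rintro ⟨hne, h | h⟩
      · exact absurd h (by simp [CatRel])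
      · exact absurd h (by simp [CatRel])
    · intro h; exact absurd h (by simp)

lemma ncard_neighborSet_spine (hd : 2 ≤ d) (k : ℕ) (h1 : 1 ≤ k) (h2 : k ≤ ℓ) :
    ((Cat ℓ (fun _ => d)).neighborSet (Sum.inl ⟨k, by omega⟩)).ncard = d := by
  rw [neighborSet_spine k h1 h2]
  have hinj : Function.Injective (fun t : Fin (d-2) =>
      (Sum.inr ⟨⟨k-1, by omega⟩, t⟩ : CatV ℓ (fun _ => d))) := by
    intro a b h
    simp only [Sum.inr.injEq] at h
    have := congrArg Sigma.snd h
    simpa using this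
  have hdisj : Disjoint
      ({Sum.inl ⟨k-1, by omega⟩, Sum.inl ⟨k+1, by omega⟩} : Set (CatV ℓ (fun _ => d)))
      (Set.range (fun t : Fin (d-2) =>
        (Sum.inr ⟨⟨k-1, by omega⟩, t⟩ : CatV ℓ (fun _ => d)))) := by
    rw [Set.disjoint_left]
    rintro x (rfl | rfl) ⟨t, ht⟩ <;> simp at ht
  rw [Set.ncard_union_eq hdisj (Set.toFinite _) (Set.toFinite _),
    Set.ncard_pair (by simp only [ne_eq, Sum.inl.injEq, Fin.ext_iff]; omega),
    ← Set.image_univ, Set.ncard_image_of_injective _ hinj, Set.ncard_univ,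
    Nat.card_eq_fintype_card, Fintype.card_fin]
  omega

lemma key_comb (d : ℕ) (hd : 4 ≤ d) (C D : Set ℕ) (hCfin : C.Finite)
    (hD : D.ncard = d) (A : ℕ → Set ℕ)
    (hsub : ∀ i, 1 ≤ i → i ≤ 2*d-2 → A i ⊆ C)
    (hU : ∀ i, 1 ≤ i → i+1 ≤ 2*d-2 → A i ∪ A (i+1) = C)
    (hI : ∀ i, 1 ≤ i → i+1 ≤ 2*d-2 → (A i ∩ A (i+1)).ncard = 1)
    (hA1 : A 1 = D) (hAL : A (2*d-2) = D) : False := by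
  have hfin : ∀ i, 1 ≤ i → i ≤ 2*d-2 → (A i).Finite :=
    fun i u v => hCfin.subset (hsub i u v)
  have claim : ∀ k, k ≤ d-2 → (A (2+2*k) ∩ D).ncard ≤ 1 + k := by
    intro k
    induction k with
    | zero =>
      intro _
      have h2 : (2:ℕ) + 2*0 = 2 := by norm_num
      rw [h2, ← hA1, Set.inter_comm]
      exact le_of_eq (hI 1 (by omega) (by omega))
    | succ k ih =>
      intro hk
      have hb1 : (1:ℕ) ≤ 2+2*k := by omega
      have hb2 : 2+2*k+1 ≤ 2*d-2 := by omega
      have hb3 : 2+2*k+2 ≤ 2*d-2 := by omega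
      have he : 2+2*(k+1) = 2+2*k+2 := by ring
      rw [he]
      have step : A (2+2*k+2) ∩ D ⊆ (A (2+2*k) ∩ D) ∪ (A (2+2*k+1) ∩ (A (2+2*k+2))) := by
        intro x hx
        by_cases hxA : x ∈ A (2+2*k)
        · exact Or.inl ⟨hxA, hx.2⟩
        · have hxC : x ∈ C := hsub (2+2*k+2) (by omega) hb3 hx.1
          have hxU : x ∈ A (2+2*k) ∪ A (2+2*k+1) := (hU (2+2*k) hb1 (by omega)) ▸ hxC
          exact Or.inr ⟨hxU.resolve_left hxA, hx.1⟩
      calc (A (2+2*k+2) ∩ D).ncard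
          ≤ ((A (2+2*k) ∩ D) ∪ (A (2+2*k+1) ∩ (A (2+2*k+2)))).ncard := by
            refine Set.ncard_le_ncard step ?_
            exact Set.Finite.union ((hfin _ hb1 (by omega)).inter_of_left _)
              ((hfin _ (by omega) hb2).inter_of_left _)
        _ ≤ (A (2+2*k) ∩ D).ncard + (A (2+2*k+1) ∩ (A (2+2*k+2))).ncard :=
            Set.ncard_union_le _ _
        _ ≤ (1 + k) + 1 := by
            have := hI (2+2*k+1) (by omega) (by omega)
            rw [show 2+2*k+1+1 = 2+2*k+2 from by ring] at this
            rw [this]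
            exact Nat.add_le_add_right (ih (by omega)) 1
        _ = 1 + (k+1) := by ring
  have hfinal := claim (d-2) le_rfl
  rw [show 2+2*(d-2) = 2*d-2 from by omega, hAL, Set.inter_self, hD] at hfinal
  omega

lemma ndeg_le_d (hd2 : 2 ≤ d) (v : CatV ℓ (fun _ => d)) :
    ndeg (Cat ℓ (fun _ => d)) v ≤ d := by
  cases v with
  | inl j =>
    obtain ⟨jv, hj⟩ := j
    rcases Nat.lt_or_ge jv 1 with h0 | h1
    · have hjv : jv = 0 := by omega
      subst hjv
      rw [ndeg, neighborSet_zero, Set.ncard_singleton]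
      omega
    · rcases Nat.lt_or_ge jv (ℓ+1) with h2 | h3
      · exact le_of_eq (ncard_neighborSet_spine hd2 jv h1 (by omega))
      · have hjv : jv = ℓ+1 := by omega
        subst hjv
        rw [ndeg, neighborSet_final, Set.ncard_singleton]
        omega
  | inr p =>
    obtain ⟨i, t⟩ := p
    rw [ndeg, neighborSet_leaf, Set.ncard_singleton]
    omega

lemma sigma_cat (d L : ℕ) (hd : 4 ≤ d) (hL : L = 2 * d - 2) :
    sigmaG (Cat L (fun _ => d)) = 2 * d - 1 := by
  have hd2 : 2 ≤ d := by omega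
  have hmem : (2*d-1) ∈ {m | ∃ x y, (Cat L (fun _ => d)).Adj x y ∧
      m = ndeg (Cat L (fun _ => d)) x + ndeg (Cat L (fun _ => d)) y - 1} := by
    refine ⟨Sum.inl ⟨1, by omega⟩, Sum.inl ⟨2, by omega⟩, adj_spine 1 (by omega), ?_⟩
    have e1 : ndeg (Cat L (fun _ => d)) (Sum.inl ⟨1, by omega⟩) = d :=
      ncard_neighborSet_spine hd2 1 (by omega) (by omega)
    have e2 : ndeg (Cat L (fun _ => d)) (Sum.inl ⟨2, by omega⟩) = d :=
      ncard_neighborSet_spine hd2 2 (by omega) (by omega)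
    rw [e1, e2]
    omega
  have hub : ∀ m ∈ {m | ∃ x y, (Cat L (fun _ => d)).Adj x y ∧
      m = ndeg (Cat L (fun _ => d)) x + ndeg (Cat L (fun _ => d)) y - 1},
      m ≤ 2*d-1 := by
    rintro m ⟨x, y, hxy, rfl⟩
    have h1 := ndeg_le_d hd2 x
    have h2 := ndeg_le_d hd2 y
    omega
  exact le_antisymm (csSup_le ⟨_, hmem⟩ hub) (le_csSup ⟨2*d-1, hub⟩ hmem)

lemma part1' (d L : ℕ) (hd : 4 ≤ d) (hL : L = 2 * d - 2) :
    ¬ CatPrecolorExists L (fun _ => d)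
        (Finset.Icc 1 (2 * d - 1)) (Finset.Icc 1 d) (Finset.Icc 1 d) 1 1 := by
  intro h
  obtain ⟨φ, hC, hstrong, hE1, hEL, -, -⟩ := h
  have hd2 : 2 ≤ d := by omega
  set A : ℕ → Set ℕ :=
    fun i => if h : i < L + 2
      then φ '' Einc (Cat L (fun _ => d)) (Sum.inl ⟨i, h⟩) else ∅ with hAdef
  have hA : ∀ i (h : i < L + 2),
      A i = φ '' Einc (Cat L (fun _ => d)) (Sum.inl ⟨i, h⟩) :=
    fun i h => dif_pos h
  have near_adj : ∀ (u v : CatV L (fun _ => d)) e f, (Cat L (fun _ => d)).Adj u v →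
      e ∈ Einc (Cat L (fun _ => d)) u → f ∈ Einc (Cat L (fun _ => d)) v →
      EdgesNear (Cat L (fun _ => d)) e f :=
    fun u v e f huv he hf => ⟨u, v, he.2, hf.2, Or.inr huv⟩
  have near_same : ∀ (v : CatV L (fun _ => d)) e f,
      e ∈ Einc (Cat L (fun _ => d)) v → f ∈ Einc (Cat L (fun _ => d)) v →
      EdgesNear (Cat L (fun _ => d)) e f :=
    fun v e f he hf => ⟨v, v, he.2, hf.2, Or.inl rfl⟩
  have hadj : ∀ (i : ℕ) (hi : i + 1 ≤ L + 1),
      (Cat L (fun _ => d)).Adj (Sum.inl ⟨i, by omega⟩) (Sum.inl ⟨i+1, by omega⟩) :=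
    fun i hi => adj_spine i (by omega)
  have hcardE : ∀ (i : ℕ) (h1 : 1 ≤ i) (h2 : i ≤ L),
      (Einc (Cat L (fun _ => d)) (Sum.inl ⟨i, by omega⟩)).ncard = d := by
    intro i h1 h2
    rw [ncard_Einc]
    exact ncard_neighborSet_spine hd2 i h1 h2
  have hEI : ∀ (i : ℕ) (h1 : 1 ≤ i) (h2 : i + 1 ≤ L),
      Einc (Cat L (fun _ => d)) (Sum.inl ⟨i, by omega⟩) ∩
        Einc (Cat L (fun _ => d)) (Sum.inl ⟨i+1, by omega⟩) =
        {s(Sum.inl ⟨i, by omega⟩, Sum.inl ⟨i+1, by omega⟩)} := by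
    intro i h1 h2
    ext e
    constructor
    · rintro ⟨⟨heE, hv1⟩, ⟨-, hv2⟩⟩
      obtain ⟨w, rfl⟩ := Sym2.mem_iff_exists.mp hv1
      rcases Sym2.mem_iff.mp hv2 with h | h
      · exact absurd h (by simp [Fin.ext_iff])
      · rw [← h]
        rfl
    · rintro rfl
      have hA' := hadj i (by omega)
      exact ⟨⟨(Cat L (fun _ => d)).mem_edgeSet.mpr hA', Sym2.mem_mk_left _ _⟩,
        ⟨(Cat L (fun _ => d)).mem_edgeSet.mpr hA', Sym2.mem_mk_right _ _⟩⟩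
  have hinjOn : ∀ (i : ℕ) (h1 : 1 ≤ i) (h2 : i + 1 ≤ L),
      Set.InjOn φ (Einc (Cat L (fun _ => d)) (Sum.inl ⟨i, by omega⟩) ∪
        Einc (Cat L (fun _ => d)) (Sum.inl ⟨i+1, by omega⟩)) := by
    intro i h1 h2 e he f hf hef
    by_contra hne
    have hA' := hadj i (by omega)
    have hnear : EdgesNear (Cat L (fun _ => d)) e f := by
      rcases he with he | he <;> rcases hf with hf | hf
      · exact near_same _ _ _ he hf
      · exact near_adj _ _ _ _ hA' he hf
      · exact near_adj _ _ _ _ hA'.symm he hf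
      · exact near_same _ _ _ he hf
    have heE : e ∈ (Cat L (fun _ => d)).edgeSet := by
      rcases he with he | he <;> exact he.1
    have hfE : f ∈ (Cat L (fun _ => d)).edgeSet := by
      rcases hf with hf | hf <;> exact hf.1
    exact hstrong e heE f hfE hne hnear hef
  have hU : ∀ (i : ℕ) (h1 : 1 ≤ i) (h2 : i + 1 ≤ L),
      A i ∪ A (i+1) = ↑(Finset.Icc 1 (2*d-1)) := by
    intro i h1 h2
    rw [hA i (by omega), hA (i+1) (by omega), ← Set.image_union]
    apply Set.eq_of_subset_of_ncard_le
    · rintro c ⟨e, he, rfl⟩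
      have heE : e ∈ (Cat L (fun _ => d)).edgeSet := by
        rcases he with he | he <;> exact he.1
      exact Finset.mem_coe.mpr (hC e heE)
    · have hcardU : (Einc (Cat L (fun _ => d)) (Sum.inl ⟨i, by omega⟩) ∪
          Einc (Cat L (fun _ => d)) (Sum.inl ⟨i+1, by omega⟩)).ncard = 2*d-1 := by
        have h5 := Set.ncard_union_add_ncard_inter
          (Einc (Cat L (fun _ => d)) (Sum.inl ⟨i, by omega⟩))
          (Einc (Cat L (fun _ => d)) (Sum.inl ⟨i+1, by omega⟩))
          (Set.toFinite _) (Set.toFinite _)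
        rw [hEI i h1 h2, Set.ncard_singleton, hcardE i h1 (by omega),
          hcardE (i+1) (by omega) h2] at h5
        omega
      rw [Set.ncard_image_of_injOn (hinjOn i h1 h2), hcardU,
        Set.ncard_coe_finset, Nat.card_Icc]
      omega
    · exact (Finset.Icc 1 (2*d-1)).finite_toSet
  have hI : ∀ (i : ℕ) (h1 : 1 ≤ i) (h2 : i + 1 ≤ L),
      (A i ∩ A (i+1)).ncard = 1 := by
    intro i h1 h2
    have hA' := hadj i (by omega)
    have heq : A i ∩ A (i+1) =
        {φ s(Sum.inl ⟨i, by omega⟩, Sum.inl ⟨i+1, by omega⟩)} := by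
      rw [hA i (by omega), hA (i+1) (by omega)]
      ext c
      constructor
      · rintro ⟨⟨e, he, rfl⟩, ⟨f, hf, hfe⟩⟩
        have hef : e = f := by
          by_contra hne
          exact hstrong e he.1 f hf.1 hne
            (near_adj _ _ _ _ hA' he hf) hfe.symm
        rw [hef] at he ⊢
        have hmem : f ∈ Einc (Cat L (fun _ => d)) (Sum.inl ⟨i, by omega⟩) ∩
            Einc (Cat L (fun _ => d)) (Sum.inl ⟨i+1, by omega⟩) := ⟨he, hf⟩
        rw [hEI i h1 h2] at hmem
        rw [hmem]
        rfl
      · rintro rfl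
        exact ⟨⟨_, ⟨(Cat L (fun _ => d)).mem_edgeSet.mpr hA', Sym2.mem_mk_left _ _⟩, rfl⟩,
          ⟨_, ⟨(Cat L (fun _ => d)).mem_edgeSet.mpr hA', Sym2.mem_mk_right _ _⟩, rfl⟩⟩
    rw [heq, Set.ncard_singleton]
  have hsub : ∀ (i : ℕ) (h1 : 1 ≤ i) (h2 : i ≤ L),
      A i ⊆ ↑(Finset.Icc 1 (2*d-1)) := by
    intro i h1 h2
    rw [hA i (by omega)]
    rintro c ⟨e, he, rfl⟩
    exact Finset.mem_coe.mpr (hC e he.1)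
  have hA1 : A 1 = ↑(Finset.Icc 1 d) := by
    rw [hA 1 (by omega)]
    exact hE1
  have hAL : A L = ↑(Finset.Icc 1 d) := by
    rw [hA L (by omega)]
    exact hEL
  refine key_comb d hd (↑(Finset.Icc 1 (2*d-1))) (↑(Finset.Icc 1 d))
    ((Finset.Icc 1 (2*d-1)).finite_toSet) ?_ A ?_ ?_ ?_ hA1 ?_
  · rw [Set.ncard_coe_finset, Nat.card_Icc]
    omega
  · rw [← hL]; exact fun i u v => hsub i u v
  · rw [← hL]; exact fun i u v => hU i u v
  · rw [← hL]; exact fun i u v => hI i u v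
  · rw [← hL]; exact hAL

end Helpers

theorem not_twoSided_odd_sigma (d : ℕ) (hd : 4 ≤ d) :
    ¬ CatPrecolorExists (2 * d - 1 - 1) (fun _ => d)
        (Finset.Icc 1 (2 * d - 1)) (Finset.Icc 1 d) (Finset.Icc 1 d) 1 1 ∧
    ¬ TwoSidedPrecolorable (2 * d - 1 - 1) (fun _ => d) (2 * d - 1) ∧
    sigmaG (Cat (2 * d - 1 - 1) (fun _ => d)) = 2 * d - 1 := by
  have hL : 2 * d - 1 - 1 = 2 * d - 2 := by omega
  refine ⟨part1' d (2 * d - 1 - 1) hd hL, ?_, sigma_cat d (2 * d - 1 - 1) hd hL⟩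
  intro h
  exact part1' d (2 * d - 1 - 1) hd hL
    (h (Finset.Icc 1 (2 * d - 1)) (Finset.Icc 1 d) (Finset.Icc 1 d)
      (by rw [Nat.card_Icc]; omega)
      (Finset.Icc_subset_Icc le_rfl (by omega))
      (Finset.Icc_subset_Icc le_rfl (by omega))
      (by rw [Nat.card_Icc]; simp)
      (by rw [Nat.card_Icc]; simp)
      1 (Finset.mem_Icc.mpr ⟨le_rfl, by omega⟩)
      1 (Finset.mem_Icc.mpr ⟨le_rfl, by omega⟩))
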